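/- Let F be a field, n, m ≥ 1, 1 ≤ i ≤ n, and t ∈ F. Let x^{Sp}_{2e_i}(t) = I + t·E_{i,2n+1−i} in M_{2n}(F) be a symplectic Chevalley generator, and let x^{(4nm)}_{e_a+e_b}(t) denote orthogonal Chevalley generators in M_{4nm}(F). Let P be the 4nm×4nm block-diagonal matrix whose first n diagonal 2m×2m blocks equal J = [[I_m, 0], [0, −Ω_m]] and whose last n diagonal 2m×2m blocks equal K = [[Ω_m, 0], [0, I_m]]. Then, under the lexicographic identification of Kronecker products, P⁻¹ · (x^{Sp}_{2e_i}(t) ⊗ I_{2m}) · P = ∏_{k=1}^{m} x^{(4nm)}_{e_{2m(i−1)+k} + e_{2m(i−1)+m+k}}(t), the factors on the right pairwise commuting. (This is the formula for the image ρ_SP(x_{2e_i}(t), I) of the conjugated Kronecker tensor product map Sp_{2n} × Sp_{2m} → SO_{4nm}.) -/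

import Mathlib

open Matrix

/-- The `d × d` exchange matrix `Ω_d`: entry 1 exactly when (1-based) `i + j = d + 1`. -/
def omegaMat (F : Type*) [CommRing F] (d : ℕ) : Matrix (Fin d) (Fin d) F :=
  fun i j => if (i : ℕ) + (j : ℕ) + 1 = d then 1 else 0

/-- `SO_d(F)`: the set of `d × d` matrices with `A · Ω_d · Aᵀ = Ω_d` and `det A = 1`. -/
def SOset (F : Type*) [CommRing F] (d : ℕ) : Set (Matrix (Fin d) (Fin d) F) :=
  {A | A * omegaMat F d * Aᵀ = omegaMat F d ∧ A.det = 1}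

/-- `Ψ_{2n} = [[0, Ω_n], [−Ω_n, 0]]`. -/
def PsiMat (F : Type*) [CommRing F] (n : ℕ) : Matrix (Fin (2*n)) (Fin (2*n)) F :=
  fun i j => if (i : ℕ) + (j : ℕ) + 1 = 2*n then (if (i : ℕ) < n then 1 else -1) else 0

/-- `Sp_{2n}(F)`: the set of `2n × 2n` matrices with `A · Ψ_{2n} · Aᵀ = Ψ_{2n}`. -/
def SpSet (F : Type*) [CommRing F] (n : ℕ) : Set (Matrix (Fin (2*n)) (Fin (2*n)) F) :=
  {A | A * PsiMat F n * Aᵀ = PsiMat F n}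

/-- Kronecker product, regarded as an `(nm) × (nm)` matrix via the lexicographic
identification sending the (1-based) pair `(i,k)` to `m(i−1)+k`. -/
def kron {F : Type*} [CommRing F] {n m : ℕ} (A : Matrix (Fin n) (Fin n) F)
    (B : Matrix (Fin m) (Fin m) F) : Matrix (Fin (n*m)) (Fin (n*m)) F :=
  Matrix.reindex finProdFinEquiv finProdFinEquiv (Matrix.kroneckerMap (· * ·) A B)

/-- 1-based matrix unit `E_{i,j}` in `M_d(F)`. -/
def Eunit (F : Type*) [CommRing F] (d : ℕ) (i j : ℕ) : Matrix (Fin d) (Fin d) F :=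
  fun p q => if (p : ℕ) + 1 = i ∧ (q : ℕ) + 1 = j then 1 else 0

/-- Symplectic Chevalley generator `x_{e_i−e_j}(t) = I + t(E_{i,j} − E_{2n+1−j,2n+1−i})`. -/
def xCsub (F : Type*) [CommRing F] (n i j : ℕ) (t : F) : Matrix (Fin (2*n)) (Fin (2*n)) F :=
  1 + t • (Eunit F (2*n) i j - Eunit F (2*n) (2*n+1-j) (2*n+1-i))

/-- Symplectic Chevalley generator `x_{e_i+e_j}(t) = I + t(E_{i,2n+1−j} + E_{j,2n+1−i})`. -/
def xCadd (F : Type*) [CommRing F] (n i j : ℕ) (t : F) : Matrix (Fin (2*n)) (Fin (2*n)) F :=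
  1 + t • (Eunit F (2*n) i (2*n+1-j) + Eunit F (2*n) j (2*n+1-i))

/-- Symplectic Chevalley generator `x_{2e_j}(t) = I + t·E_{j,2n+1−j}`. -/
def xClong (F : Type*) [CommRing F] (n j : ℕ) (t : F) : Matrix (Fin (2*n)) (Fin (2*n)) F :=
  1 + t • Eunit F (2*n) j (2*n+1-j)

/-- Signed symplectic generator `x_{a₁e_i + a₂e_j}(t)` for `i < j` and `a₁, a₂ ∈ {1,−1}`,
using the convention `x_{−α}(t) = x_α(t)ᵀ`. -/
def xCs (F : Type*) [CommRing F] (n i j : ℕ) (a₁ a₂ : ℤ) (t : F) :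
    Matrix (Fin (2*n)) (Fin (2*n)) F :=
  if a₁ = 1 then (if a₂ = 1 then xCadd F n i j t else xCsub F n i j t)
  else (if a₂ = 1 then (xCsub F n i j t)ᵀ else (xCadd F n i j t)ᵀ)

/-- Signed symplectic generator `x_{2a e_j}(t)` for `a ∈ {1,−1}`. -/
def xCls (F : Type*) [CommRing F] (n j : ℕ) (a : ℤ) (t : F) :
    Matrix (Fin (2*n)) (Fin (2*n)) F :=
  if a = 1 then xClong F n j t else (xClong F n j t)ᵀ

/-- Orthogonal Chevalley generator `x_{e_i−e_j}(t) = I + t(E_{i,j} − E_{d+1−j,d+1−i})`. -/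
def xDsub (F : Type*) [CommRing F] (d i j : ℕ) (t : F) : Matrix (Fin d) (Fin d) F :=
  1 + t • (Eunit F d i j - Eunit F d (d+1-j) (d+1-i))

/-- Orthogonal Chevalley generator `x_{e_i+e_j}(t) = I + t(E_{i,d+1−j} − E_{j,d+1−i})`. -/
def xDadd (F : Type*) [CommRing F] (d i j : ℕ) (t : F) : Matrix (Fin d) (Fin d) F :=
  1 + t • (Eunit F d i (d+1-j) - Eunit F d j (d+1-i))

/-- Signed orthogonal generator `x_{a₁e_i + a₂e_j}(t)` in `M_d(F)`, for `i < j` and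
`a₁, a₂ ∈ {1,−1}`, with the convention `x_{−α}(t) = x_α(t)ᵀ`. -/
def xDs (F : Type*) [CommRing F] (d i j : ℕ) (a₁ a₂ : ℤ) (t : F) :
    Matrix (Fin d) (Fin d) F :=
  if a₁ = 1 then (if a₂ = 1 then xDadd F d i j t else xDsub F d i j t)
  else (if a₂ = 1 then (xDsub F d i j t)ᵀ else (xDadd F d i j t)ᵀ)

/-- Short orthogonal Chevalley generator
`x_{e_j}(t) = I + s·t·E_{j,n+1} − s·t·E_{n+1,2n+2−j} − t²·E_{j,2n+2−j}` in `M_{2n+1}(F)`,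
where `s² = 2`. -/
def xBshort (F : Type*) [CommRing F] (n : ℕ) (s : F) (j : ℕ) (t : F) :
    Matrix (Fin (2*n+1)) (Fin (2*n+1)) F :=
  1 + (s*t) • Eunit F (2*n+1) j (n+1) - (s*t) • Eunit F (2*n+1) (n+1) (2*n+2-j)
    - (t^2) • Eunit F (2*n+1) j (2*n+2-j)

/-- Signed short orthogonal generator `x_{a e_j}(t)` for `a ∈ {1,−1}`. -/
def xBs (F : Type*) [CommRing F] (n : ℕ) (s : F) (j : ℕ) (a : ℤ) (t : F) :
    Matrix (Fin (2*n+1)) (Fin (2*n+1)) F :=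
  if a = 1 then xBshort F n s j t else (xBshort F n s j t)ᵀ

/-- The commutator `(g,h) = g·h·g⁻¹·h⁻¹`. -/
noncomputable def mcomm {F : Type*} [Field F] {d : ℕ} (g h : Matrix (Fin d) (Fin d) F) :
    Matrix (Fin d) (Fin d) F :=
  g * h * g⁻¹ * h⁻¹

/-- Entry function (0-based) of the `2m × 2m` block `J = [[I_m, 0], [0, −Ω_m]]`. -/
def Jent (F : Type*) [CommRing F] (m r c : ℕ) : F :=
  if r < m ∧ c < m then (if r = c then 1 else 0)
  else if m ≤ r ∧ m ≤ c then (if r + c + 1 = 3*m then -1 else 0)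
  else 0

/-- Entry function (0-based) of the `2m × 2m` block `K = [[Ω_m, 0], [0, I_m]]`. -/
def Kent (F : Type*) [CommRing F] (m r c : ℕ) : F :=
  if r < m ∧ c < m then (if r + c + 1 = m then 1 else 0)
  else if m ≤ r ∧ m ≤ c then (if r = c then 1 else 0)
  else 0

/-- The `4nm × 4nm` block-diagonal matrix `P` whose first `n` diagonal `2m × 2m` blocks
equal `J` and whose last `n` diagonal blocks equal `K`. -/
def Pmat (F : Type*) [CommRing F] (n m : ℕ) :
    Matrix (Fin ((2*n)*(2*m))) (Fin ((2*n)*(2*m))) F :=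
  fun p q =>
    if (p : ℕ) / (2*m) = (q : ℕ) / (2*m) then
      (if (p : ℕ) / (2*m) < n then Jent F m ((p : ℕ) % (2*m)) ((q : ℕ) % (2*m))
       else Kent F m ((p : ℕ) % (2*m)) ((q : ℕ) % (2*m)))
    else 0

/-!
Write `E = E_{i,ī}` with `ī = 2n+1-i`, so that `x_{2e_i}(t) ⊗ I = 1 + t (E ⊗ I)`, and let `Q`
be the projection of `F^{2n}` onto its first `n` coordinates. Then `P = Q ⊗ J + (1 - Q) ⊗ K`
with `J² = K² = 1`, so `P⁻¹ = P`; and since `i ≤ n < ī` we have `QE = E`, `EQ = 0`, whence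
`P (E ⊗ I) P = E ⊗ JK`. Now `JK = diag(Ω_m, -Ω_m) = ∑_k (E_{k,m+1-k} - E_{m+k,2m+1-k})`, and
the Kronecker product of `E` with the `k`-th summand is exactly the nilpotent part `N_k` of
the orthogonal generator `x_{e_a+e_b}(t)`, `a = 2m(i-1)+k`, `b = a+m`. As `E² = 0`, all
products `N_j N_k` vanish, so these generators commute and their product is `1 + t ∑_k N_k`.
-/

section Kron

variable {R : Type*} [CommRing R] {n m : ℕ}

lemma kron_apply (A : Matrix (Fin n) (Fin n) R) (B : Matrix (Fin m) (Fin m) R)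
    (p q : Fin (n*m)) :
    kron A B p q = A p.divNat q.divNat * B p.modNat q.modNat := rfl

lemma kron_mul (A C : Matrix (Fin n) (Fin n) R) (B D : Matrix (Fin m) (Fin m) R) :
    kron A B * kron C D = kron (A * C) (B * D) := by
  simp only [kron, reindex_apply, submatrix_mul_equiv, ← mul_kronecker_mul]

lemma kron_one_one : kron (1 : Matrix (Fin n) (Fin n) R) (1 : Matrix (Fin m) (Fin m) R) = 1 := by
  rw [kron, reindex_apply, one_kronecker_one, submatrix_one_equiv]

lemma kron_add_left (A B : Matrix (Fin n) (Fin n) R) (C : Matrix (Fin m) (Fin m) R) :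
    kron (A + B) C = kron A C + kron B C := by
  ext p q; simp [kron_apply, add_mul]

lemma kron_smul_left (t : R) (A : Matrix (Fin n) (Fin n) R) (C : Matrix (Fin m) (Fin m) R) :
    kron (t • A) C = t • kron A C := by
  ext p q; simp [kron_apply, mul_assoc]

lemma kron_zero_left (C : Matrix (Fin m) (Fin m) R) :
    kron (0 : Matrix (Fin n) (Fin n) R) C = 0 := by
  ext p q; simp [kron_apply]

lemma kron_sub_right (A : Matrix (Fin n) (Fin n) R) (B C : Matrix (Fin m) (Fin m) R) :
    kron A (B - C) = kron A B - kron A C := by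
  ext p q; simp [kron_apply, mul_sub]

lemma kron_sum_right {ι : Type*} (s : Finset ι) (A : Matrix (Fin n) (Fin n) R)
    (B : ι → Matrix (Fin m) (Fin m) R) :
    kron A (∑ k ∈ s, B k) = ∑ k ∈ s, kron A (B k) := by
  ext p q; simp [kron_apply, Matrix.sum_apply, Finset.mul_sum]

end Kron

lemma div_add_one_eq_and_mod_add_one_eq_iff {M x u v : ℕ} (hu : 1 ≤ u) (hv : 1 ≤ v)
    (hvM : v ≤ M) :
    x / M + 1 = u ∧ x % M + 1 = v ↔ x + 1 = M * (u - 1) + v := by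
  have := Nat.div_mod_unique (a := x) (d := u - 1) (c := v - 1) (b := M) (by omega)
  omega

/-- On lexicographic indices `M(a-1)+c`, the reflection `j ↦ NM+1-j` is
`(a, c) ↦ (N+1-a, M+1-c)`. -/
lemma lex_index_reflect {N M a c : ℕ} (ha : 1 ≤ a) (haN : a ≤ N) (hc : 1 ≤ c)
    (hcM : c ≤ M) :
    M * ((N + 1 - a) - 1) + (M + 1 - c) = N * M + 1 - (M * (a - 1) + c) := by
  obtain ⟨a, rfl⟩ : ∃ a', a = a' + 1 := ⟨a - 1, by omega⟩
  obtain ⟨r, rfl⟩ : ∃ r, N = a + 1 + r := ⟨N - (a + 1), by omega⟩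
  obtain ⟨c, rfl⟩ : ∃ c', c = c' + 1 := ⟨c - 1, by omega⟩
  obtain ⟨u, rfl⟩ : ∃ u, M = c + 1 + u := ⟨M - (c + 1), by omega⟩
  rw [show a + 1 + r + 1 - (a + 1) - 1 = r by omega, show c + 1 + u + 1 - (c + 1) = u + 1 by omega,
    Nat.add_sub_cancel]
  symm; apply Nat.sub_eq_of_eq_add; ring

section Eunit

variable {R : Type*} [CommRing R]

lemma kron_Eunit_Eunit {n m a b k l : ℕ} (ha : 1 ≤ a) (hb : 1 ≤ b)
    (hk : 1 ≤ k) (hkm : k ≤ m) (hl : 1 ≤ l) (hlm : l ≤ m) :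
    kron (Eunit R n a b) (Eunit R m k l)
      = Eunit R (n * m) (m * (a - 1) + k) (m * (b - 1) + l) := by
  ext p q
  have hp := div_add_one_eq_and_mod_add_one_eq_iff (x := p) ha hk hkm
  have hq := div_add_one_eq_and_mod_add_one_eq_iff (x := q) hb hl hlm
  simp only [kron_apply, Eunit, Fin.coe_divNat, Fin.coe_modNat, ← hp, ← hq]
  by_cases h₁ : (p : ℕ) / m + 1 = a <;> by_cases h₂ : (p : ℕ) % m + 1 = k <;>
    by_cases h₃ : (q : ℕ) / m + 1 = b <;> by_cases h₄ : (q : ℕ) % m + 1 = l <;>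
    simp [h₁, h₂, h₃, h₄]

lemma Eunit_mul_Eunit_of_ne {d a b c e : ℕ} (h : b ≠ c) :
    Eunit R d a b * Eunit R d c e = 0 := by
  ext p q
  simp only [mul_apply, Eunit, Matrix.zero_apply]
  exact Finset.sum_eq_zero fun s _ => by grind

end Eunit

def monomialMatrix (R : Type*) [Zero R] (d : ℕ) (σ : ℕ → ℕ) (s : ℕ → R) :
    Matrix (Fin d) (Fin d) R :=
  Matrix.of fun r c => if (c : ℕ) = σ r then s r else 0

section Monomial

variable {R : Type*} [CommRing R] {d : ℕ}

lemma monomialMatrix_mul {σ τ : ℕ → ℕ} (s u : ℕ → R) (hσ : ∀ r < d, σ r < d) :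
    monomialMatrix R d σ s * monomialMatrix R d τ u
      = monomialMatrix R d (τ ∘ σ) (fun r => s r * u (σ r)) := by
  ext r c
  rw [mul_apply, Finset.sum_eq_single ⟨σ r, hσ r r.2⟩]
  · simp [monomialMatrix]
  · intro b _ hb
    simp [monomialMatrix, Fin.ext_iff.not.mp hb]
  · simp

lemma monomialMatrix_congr {σ τ : ℕ → ℕ} {s u : ℕ → R}
    (h : ∀ r < d, σ r = τ r ∧ s r = u r) :
    monomialMatrix R d σ s = monomialMatrix R d τ u := by
  ext r c
  obtain ⟨h₁, h₂⟩ := h r r.2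
  simp [monomialMatrix, h₁, h₂]

lemma monomialMatrix_id_one : monomialMatrix R d id 1 = 1 := by
  ext r c
  simp [monomialMatrix, one_apply, Fin.ext_iff, eq_comm]

end Monomial

/-- `J = [[I_m, 0], [0, -Ω_m]]` as a signed permutation matrix on 0-based indices;
`Kmat` is `K = [[Ω_m, 0], [0, I_m]]` in the same form. -/
def Jmat (R : Type*) [CommRing R] (m : ℕ) : Matrix (Fin (2*m)) (Fin (2*m)) R :=
  monomialMatrix R (2*m) (fun r => if r < m then r else 3*m - 1 - r)
    (fun r => if r < m then 1 else -1)

def Kmat (R : Type*) [CommRing R] (m : ℕ) : Matrix (Fin (2*m)) (Fin (2*m)) R :=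
  monomialMatrix R (2*m) (fun r => if r < m then m - 1 - r else r) 1

section JK

variable {R : Type*} [CommRing R] {m : ℕ}

lemma Jmat_mul_self : Jmat R m * Jmat R m = 1 := by
  rw [Jmat, monomialMatrix_mul _ _ (fun r hr => by split_ifs <;> omega), ← monomialMatrix_id_one]
  refine monomialMatrix_congr fun r hr => ?_
  simp only [Function.comp_apply, id, Pi.one_apply]
  split_ifs <;> first | (exfalso; omega) | (constructor <;> first | omega | norm_num)

lemma Kmat_mul_self : Kmat R m * Kmat R m = 1 := by
  rw [Kmat, monomialMatrix_mul _ _ (fun r hr => by split_ifs <;> omega), ← monomialMatrix_id_one]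
  refine monomialMatrix_congr fun r hr => ?_
  simp only [Function.comp_apply, id, Pi.one_apply]
  split_ifs <;> first | (exfalso; omega) | (constructor <;> first | omega | norm_num)

lemma Jmat_mul_Kmat : Jmat R m * Kmat R m
    = ∑ k ∈ Finset.range m,
      (Eunit R (2*m) (k+1) (m+1-(k+1)) - Eunit R (2*m) (m+(k+1)) (2*m+1-(k+1))) := by
  rw [Jmat, Kmat, monomialMatrix_mul _ _ (fun r hr => by split_ifs <;> omega)]
  ext r c
  rw [Matrix.sum_apply, Finset.sum_eq_single (if (r : ℕ) < m then (r : ℕ) else r - m)]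
  · simp only [Eunit, monomialMatrix, Matrix.sub_apply, of_apply, Function.comp_apply,
      Pi.one_apply, mul_one]
    grind
  · intro b _ hb
    simp only [Eunit, Matrix.sub_apply]
    grind
  · grind

end JK

def firstHalfProj (R : Type*) [CommRing R] (n : ℕ) : Matrix (Fin (2*n)) (Fin (2*n)) R :=
  diagonal fun a => if (a : ℕ) < n then 1 else 0

section Proj

variable {R : Type*} [CommRing R]

lemma firstHalfProj_isIdempotentElem (n : ℕ) : IsIdempotentElem (firstHalfProj R n) := by
  rw [IsIdempotentElem, firstHalfProj, diagonal_mul_diagonal]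
  congr 1; ext a; split_ifs <;> simp

lemma Pmat_eq_kron (n m : ℕ) : Pmat R n m
    = kron (firstHalfProj R n) (Jmat R m) + kron (1 - firstHalfProj R n) (Kmat R m) := by
  ext p q
  have hp := p.modNat.isLt
  have hq := q.modNat.isLt
  simp only [Pmat, Jent, Kent, Jmat, Kmat, monomialMatrix, firstHalfProj, Matrix.add_apply,
    Matrix.sub_apply, kron_apply, one_apply, diagonal_apply, of_apply, Pi.one_apply, Fin.ext_iff,
    Fin.coe_divNat, Fin.coe_modNat] at hp hq ⊢
  grind

lemma firstHalfProj_mul_Eunit {n a b : ℕ} (han : a ≤ n) :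
    firstHalfProj R n * Eunit R (2*n) a b = Eunit R (2*n) a b := by
  ext p q
  simp only [firstHalfProj, diagonal_mul, Eunit]
  grind

lemma Eunit_mul_firstHalfProj {n a b : ℕ} (hb : n < b) :
    Eunit R (2*n) a b * firstHalfProj R n = 0 := by
  ext p q
  simp only [firstHalfProj, mul_diagonal, Eunit, Matrix.zero_apply]
  grind

end Proj

section Conj

variable {R : Type*} [CommRing R] {n m : ℕ} {Q E : Matrix (Fin n) (Fin n) R}
  {J K : Matrix (Fin m) (Fin m) R}

lemma kron_add_kron_one_sub_mul_self (hQ : IsIdempotentElem Q) (hJ : J * J = 1)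
    (hK : K * K = 1) :
    (kron Q J + kron (1 - Q) K) * (kron Q J + kron (1 - Q) K) = 1 := by
  simp only [add_mul, mul_add, kron_mul, hQ.eq, hQ.one_sub.eq, hQ.mul_one_sub_self,
    hQ.one_sub_mul_self, hJ, hK, kron_zero_left, add_zero, zero_add, ← kron_add_left,
    add_sub_cancel, kron_one_one]

lemma kron_add_kron_one_sub_conj (hQE : Q * E = E) (hEQ : E * Q = 0) :
    (kron Q J + kron (1 - Q) K) * kron E 1 * (kron Q J + kron (1 - Q) K) = kron E (J * K) := by
  have hQE' : (1 - Q) * E = 0 := by rw [sub_mul, one_mul, hQE, sub_self]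
  have hEQ' : E * (1 - Q) = E := by rw [mul_sub, mul_one, hEQ, sub_zero]
  simp only [add_mul, mul_add, kron_mul, hQE, hQE', hEQ, hEQ', mul_one, kron_zero_left,
    add_zero, zero_add]

end Conj

lemma prod_range_one_add_of_mul_eq_zero {A : Type*} [Ring A] (N : ℕ → A)
    (hN : ∀ j k, N j * N k = 0) (m : ℕ) :
    ((List.range m).map fun k => 1 + N k).prod = 1 + ∑ k ∈ Finset.range m, N k := by
  induction m with
  | zero => simp
  | succ m ih =>
    have hS : (∑ k ∈ Finset.range m, N k) * N m = 0 := by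
      rw [Finset.sum_mul]; exact Finset.sum_eq_zero fun k _ => hN k m
    rw [List.range_succ, List.map_append, List.prod_append, ih, Finset.sum_range_succ]
    simp only [List.map_cons, List.map_nil, List.prod_cons, List.prod_nil, mul_one, mul_add,
      add_mul, one_mul, hS]
    abel

lemma xDadd_eq_one_add_kron {R : Type*} [CommRing R] {n m i k : ℕ} (hi : 1 ≤ i) (hin : i ≤ n)
    (hk : 1 ≤ k) (hkm : k ≤ m) (t : R) :
    xDadd R ((2*n)*(2*m)) (2*m*(i-1)+k) (2*m*(i-1)+m+k) t
      = 1 + t • kron (Eunit R (2*n) i (2*n+1-i))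
          (Eunit R (2*m) k (m+1-k) - Eunit R (2*m) (m+k) (2*m+1-k)) := by
  have h₁ : 2*m*((2*n+1-i)-1) + (m+1-k) = 2*n*(2*m)+1-(2*m*(i-1)+m+k) := by
    have := lex_index_reflect (N := 2*n) (M := 2*m) (c := m+k) hi (by omega) (by omega) (by omega)
    rwa [show 2*m+1-(m+k) = m+1-k by omega, ← add_assoc] at this
  have h₂ := lex_index_reflect (N := 2*n) (M := 2*m) hi (by omega) hk (by omega)
  rw [xDadd, kron_sub_right, kron_Eunit_Eunit hi (by omega) hk (by omega) (by omega) (by omega),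
    kron_Eunit_Eunit hi (by omega) (by omega) (by omega) (by omega) (by omega), h₁, h₂,
    ← add_assoc]

theorem conj_kron_sp_long_generator_general (F : Type*) [Field F] (n m : ℕ)
    (i : ℕ) (hi : 1 ≤ i) (hin : i ≤ n) (t : F) :
    let D := (2*n)*(2*m)
    let f : ℕ → Matrix (Fin D) (Fin D) F :=
      fun k => xDadd F D (2*m*(i-1)+k) (2*m*(i-1)+m+k) t
    (Pmat F n m)⁻¹ * kron (xClong F n i t) (1 : Matrix (Fin (2*m)) (Fin (2*m)) F)
        * Pmat F n m
        = ((List.range m).map (fun k => f (k+1))).prod ∧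
    ∀ k ∈ Finset.Icc 1 m, ∀ k' ∈ Finset.Icc 1 m, Commute (f k) (f k') := by
  intro D f
  set E := Eunit F (2*n) i (2*n+1-i)
  have hEE : E * E = 0 := Eunit_mul_Eunit_of_ne (by omega)
  set N : ℕ → Matrix (Fin ((2*n)*(2*m))) (Fin ((2*n)*(2*m))) F := fun k =>
    t • kron E (Eunit F (2*m) k (m+1-k) - Eunit F (2*m) (m+k) (2*m+1-k))
  have hNN : ∀ j k, N j * N k = 0 := fun j k => by
    simp only [N, smul_mul_smul_comm, kron_mul, hEE, kron_zero_left, smul_zero]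
  have hf : ∀ k ∈ Finset.Icc 1 m, f k = 1 + N k := fun k hk => by
    rw [Finset.mem_Icc] at hk
    exact xDadd_eq_one_add_kron hi hin hk.1 hk.2 t
  have hP : Pmat F n m * Pmat F n m = 1 := by
    rw [Pmat_eq_kron n m]
    exact kron_add_kron_one_sub_mul_self (firstHalfProj_isIdempotentElem n) Jmat_mul_self
      Kmat_mul_self
  refine ⟨?_, fun k hk k' hk' => ?_⟩
  · calc (Pmat F n m)⁻¹ * kron (xClong F n i t) 1 * Pmat F n m
        = Pmat F n m * (1 + t • kron E 1) * Pmat F n m := by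
          rw [inv_eq_left_inv hP, xClong, kron_add_left, kron_one_one, kron_smul_left]
      _ = 1 + t • kron E (Jmat F m * Kmat F m) := by
          rw [mul_add, add_mul, mul_one, hP, Matrix.mul_smul, Matrix.smul_mul, Pmat_eq_kron n m,
            kron_add_kron_one_sub_conj (firstHalfProj_mul_Eunit hin)
              (Eunit_mul_firstHalfProj (by omega))]
      _ = 1 + ∑ k ∈ Finset.range m, N (k+1) := by
          rw [Jmat_mul_Kmat, kron_sum_right, Finset.smul_sum]
      _ = ((List.range m).map fun k => 1 + N (k+1)).prod :=
          (prod_range_one_add_of_mul_eq_zero _ (fun j k => hNN _ _) m).symm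
      _ = ((List.range m).map fun k => f (k+1)).prod := by
          congr 1
          refine List.map_congr_left fun k hk => (hf (k+1) ?_).symm
          simp only [List.mem_range] at hk
          simp only [Finset.mem_Icc]; omega
  · have hNN' : Commute (N k) (N k') := by rw [Commute, SemiconjBy, hNN, hNN]
    rw [hf k hk, hf k' hk']
    exact (Commute.one_left _).add_left ((Commute.one_right _).add_right hNN')

/-- the image `ρ_SP(x_{2e_i}(t), I) = P⁻¹ · (x_{2e_i}(t) ⊗ I_{2m}) · P` of
the conjugated Kronecker tensor product map `Sp_{2n} × Sp_{2m} → SO_{4nm}` equals the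
product `∏_{k=1}^{m} x_{e_{2m(i−1)+k} + e_{2m(i−1)+m+k}}(t)` of orthogonal Chevalley
generators of `M_{4nm}(F)`, whose factors pairwise commute. -/
theorem conj_kron_sp_long_generator (F : Type*) [Field F] (n m : ℕ)
    (hn : 1 ≤ n) (hm : 1 ≤ m) (i : ℕ) (hi : 1 ≤ i) (hin : i ≤ n) (t : F) :
    let D := (2*n)*(2*m)
    let f : ℕ → Matrix (Fin D) (Fin D) F :=
      fun k => xDadd F D (2*m*(i-1)+k) (2*m*(i-1)+m+k) t
    (Pmat F n m)⁻¹ * kron (xClong F n i t) (1 : Matrix (Fin (2*m)) (Fin (2*m)) F)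
        * Pmat F n m
        = ((List.range m).map (fun k => f (k+1))).prod ∧
    ∀ k ∈ Finset.Icc 1 m, ∀ k' ∈ Finset.Icc 1 m, Commute (f k) (f k') :=
  conj_kron_sp_long_generator_general F n m i hi hin t
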